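/- Let 0 < p < q < 1 with q > 2p. Then D(p‖q) ≤ log(1/(1-q)), and (q-p)/D(p‖q) ≥ (q/(-4·log(1-q)))·(1/p)/((1/p) - (1/q)). -/

import Mathlib

/-!
Writing `D(p‖q) = q·f(p/q) + (1-q)·f((1-p)/(1-q))` with the Kullback–Leibler function
`f x = x log x + 1 - x ≥ 0`, which vanishes only at `1`, shows `D(p‖q) > 0`. Dropping the
nonpositive term `p log(p/q)` and bounding `(1-p) log((1-p)/(1-q)) ≤ log(1/(1-q))` gives the first
inequality. The left side of the second one is `q² / (4(q-p)·log(1/(1-q)))`, and `q > 2p` gives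
`q² ≤ 4(q-p)²`, so it is at most `(q-p)/log(1/(1-q)) ≤ (q-p)/D(p‖q)`.
-/

open Real InformationTheory

noncomputable def binaryKL (p q : ℝ) : ℝ :=
  p * log (p / q) + (1 - p) * log ((1 - p) / (1 - q))

section BinaryKL

variable {p q : ℝ}

theorem binaryKL_eq_klFun (hq : q ≠ 0) (hq1 : q ≠ 1) :
    binaryKL p q = q * klFun (p / q) + (1 - q) * klFun ((1 - p) / (1 - q)) := by
  have hq1' : 1 - q ≠ 0 := sub_ne_zero.2 hq1.symm
  simp only [binaryKL, klFun_apply]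
  field_simp
  ring

theorem binaryKL_pos (hp : 0 ≤ p) (hp1 : p ≤ 1) (hq : 0 < q) (hq1 : q < 1) (hpq : p ≠ q) :
    0 < binaryKL p q := by
  have hfirst : 0 < klFun (p / q) := by
    refine (klFun_nonneg (by positivity)).lt_of_ne' fun h => hpq ?_
    rw [klFun_eq_zero_iff (by positivity), div_eq_one_iff_eq hq.ne'] at h
    exact h
  have hsecond : 0 ≤ klFun ((1 - p) / (1 - q)) :=
    klFun_nonneg (div_nonneg (by linarith) (by linarith))
  rw [binaryKL_eq_klFun hq.ne' hq1.ne]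
  nlinarith

theorem binaryKL_le_log_one_div_one_sub (hp : 0 ≤ p) (hpq : p ≤ q) (hq1 : q < 1) :
    binaryKL p q ≤ log (1 / (1 - q)) := by
  have h1q : 0 < 1 - q := by linarith
  have hfirst : p * log (p / q) ≤ 0 :=
    mul_nonpos_of_nonneg_of_nonpos hp (log_nonpos (div_nonneg hp (hp.trans hpq)) (div_le_one_of_le₀ hpq (by linarith)))
  have hlog_nonneg : 0 ≤ log ((1 - p) / (1 - q)) :=
    log_nonneg ((one_le_div h1q).2 (by linarith))
  have hlog_le : log ((1 - p) / (1 - q)) ≤ log (1 / (1 - q)) :=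
    log_le_log (div_pos (by linarith) h1q) (div_le_div_of_nonneg_right (by linarith) h1q.le)
  have hsecond : (1 - p) * log ((1 - p) / (1 - q)) ≤ log ((1 - p) / (1 - q)) := by nlinarith
  unfold binaryKL
  linarith

end BinaryKL

theorem kl_bound_large_eps_general (p q : ℝ) (hp : 0 < p) (hq : q < 1)
    (h2 : 2 * p < q) :
    p * Real.log (p / q) + (1 - p) * Real.log ((1 - p) / (1 - q))
      ≤ Real.log (1 / (1 - q)) ∧
    (q / (-4 * Real.log (1 - q))) * ((1 / p) / (1 / p - 1 / q))
      ≤ (q - p) /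
        (p * Real.log (p / q) + (1 - p) * Real.log ((1 - p) / (1 - q))) := by
  change binaryKL p q ≤ _ ∧ _ ≤ (q - p) / binaryKL p q
  have hpq : p < q := by linarith
  have hD_le := binaryKL_le_log_one_div_one_sub hp.le hpq.le hq
  have hD_pos := binaryKL_pos hp.le (by linarith) (by linarith) hq hpq.ne
  have hL : log (1 / (1 - q)) = -log (1 - q) := by rw [one_div, log_inv]
  refine ⟨hD_le, ?_⟩
  calc q / (-4 * log (1 - q)) * ((1 / p) / (1 / p - 1 / q))
      = q ^ 2 / (4 * (q - p)) / log (1 / (1 - q)) := by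
        have hq0 : q ≠ 0 := by linarith
        have hqp : q - p ≠ 0 := by linarith
        have hlog : log (1 - q) ≠ 0 := (log_neg (by linarith) (by linarith)).ne
        rw [hL]
        field_simp
    _ ≤ (q - p) / log (1 / (1 - q)) := by
        gcongr
        · exact hD_pos.le.trans hD_le
        · rw [div_le_iff₀ (by linarith)]
          nlinarith
    _ ≤ (q - p) / binaryKL p q := by
        gcongr

/-- For `0 < p < q < 1` with `q > 2p`, the binary KL divergence satisfies
`D(p‖q) ≤ log(1/(1-q))`, and
`(q-p)/D(p‖q) ≥ (q/(-4·log(1-q)))·(1/p)/((1/p) - (1/q))`. -/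
theorem kl_bound_large_eps (p q : ℝ) (hp : 0 < p) (hpq : p < q) (hq : q < 1)
    (h2 : 2 * p < q) :
    p * Real.log (p / q) + (1 - p) * Real.log ((1 - p) / (1 - q))
      ≤ Real.log (1 / (1 - q)) ∧
    (q / (-4 * Real.log (1 - q))) * ((1 / p) / (1 / p - 1 / q))
      ≤ (q - p) /
        (p * Real.log (p / q) + (1 - p) * Real.log ((1 - p) / (1 - q))) :=
  kl_bound_large_eps_general p q hp hq h2
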